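/- arXiv:2006.03544 — 5 statements merged into one kernel-verified Lean document; each statement's English description precedes it below -/
import Mathlib

section
/- In a topological exponential vector space X over K, every neighbourhood of θ is an absorbing set. -/
open Pointwise

/-- `K = ℝ` or `ℂ` is captured by `RCLike`; the additive identity `θ` is written `0`. -/
class ExpVectorSpace (K : Type*) (X : Type*) [RCLike K] extends
    AddCommMonoid X, PartialOrder X, SMul K X where
  /-- A2 -/
  add_le_add_right' : ∀ {x y : X}, x ≤ y → ∀ z : X, x + z ≤ y + z
  /-- A2 -/
  smul_le_smul' : ∀ {x y : X}, x ≤ y → ∀ α : K, α • x ≤ α • y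
  /-- A3(i) -/
  smul_add' : ∀ (α : K) (x y : X), α • (x + y) = α • x + α • y
  /-- A3(ii) -/
  mul_smul' : ∀ (α β : K) (x : X), α • (β • x) = (α * β) • x
  /-- A3(iii) -/
  add_smul_le' : ∀ (α β : K) (x : X), (α + β) • x ≤ α • x + β • x
  /-- A3(iv) -/
  one_smul' : ∀ x : X, (1 : K) • x = x
  /-- A4 -/
  smul_eq_zero_iff' : ∀ (α : K) (x : X), α • x = 0 ↔ α = 0 ∨ x = 0
  /-- A5; `IsMin x` encodes the paper's `x ∈ X₀`. -/
  add_neg_one_smul_eq_zero_iff' : ∀ x : X, x + (-1 : K) • x = 0 ↔ IsMin x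
  /-- A6 -/
  exists_isMin_le' : ∀ x : X, ∃ p : X, IsMin p ∧ p ≤ x

def EvsAbsorbing (K : Type*) {X : Type*} [RCLike K] [ExpVectorSpace K X] (A : Set X) : Prop :=
  ∀ x : X, ∃ α : ℝ, 0 < α ∧ ∀ μ : K, ‖μ‖ ≤ α → μ • x ∈ A

def EvsBalanced (K : Type*) {X : Type*} [RCLike K] [ExpVectorSpace K X] (A : Set X) : Prop :=
  ∀ α : K, ‖α‖ ≤ 1 → ∀ x ∈ A, α • x ∈ A

def upSet {X : Type*} [Preorder X] (A : Set X) : Set X := {x | ∃ a ∈ A, a ≤ x}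

def downSet {X : Type*} [Preorder X] (A : Set X) : Set X := {x | ∃ a ∈ A, x ≤ a}

class TopExpVectorSpace (K : Type*) (X : Type*) [RCLike K] [TopologicalSpace X] extends
    ExpVectorSpace K X where
  continuous_add' : Continuous fun p : X × X => p.1 + p.2
  continuous_smul' : Continuous fun p : K × X => p.1 • p.2
  isClosed_le' : IsClosed {p : X × X | p.1 ≤ p.2}

def EvsBounded (K : Type*) {X : Type*} [RCLike K] [TopologicalSpace X]
    [TopExpVectorSpace K X] (A : Set X) : Prop :=
  ∀ V ∈ nhds (0 : X), ∃ α : ℝ, 0 < α ∧ ∀ μ : K, ‖μ‖ ≤ α → (μ • A : Set X) ⊆ V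

open Filter Topology

theorem ExpVectorSpace.zero_smul {K X : Type*} [RCLike K] [ExpVectorSpace K X] (x : X) :
    (0 : K) • x = 0 :=
  (smul_eq_zero_iff' 0 x).2 (Or.inl rfl)

namespace TopExpVectorSpace

variable {K X : Type*} [RCLike K] [TopologicalSpace X] [TopExpVectorSpace K X]

variable (K) in
theorem continuous_smul_const (x : X) : Continuous fun μ : K => μ • x :=
  continuous_smul'.comp (continuous_id.prodMk continuous_const)

variable (K) in
theorem tendsto_smul_const_nhds_zero (x : X) :
    Tendsto (fun μ : K => μ • x) (𝓝 0) (𝓝 0) := by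
  simpa only [ExpVectorSpace.zero_smul] using (continuous_smul_const K x).tendsto 0

end TopExpVectorSpace

/-- in a topological evs, every neighbourhood of θ is absorbing. -/
theorem stmt7 {K X : Type*} [RCLike K] [TopologicalSpace X] [TopExpVectorSpace K X]
    {U : Set X} (hU : U ∈ nhds (0 : X)) : EvsAbsorbing K U := by
  intro x
  obtain ⟨α, hα, hball⟩ := Metric.nhds_basis_closedBall.mem_iff.1
    (TopExpVectorSpace.tendsto_smul_const_nhds_zero K x hU)
  exact ⟨α, hα, fun μ hμ => hball (mem_closedBall_zero_iff.2 hμ)⟩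
end

section
/- In a topological exponential vector space X over K, every neighbourhood U of θ contains a balanced neighbourhood V of θ. -/
open Pointwise

/-!
By continuity of `(α, x) ↦ α • x` at `(0, θ)` there are `ε > 0` and a neighbourhood `t` of `θ`
with `α • t ⊆ U` whenever `‖α‖ < ε`. The union `V` of these sets `α • t` is balanced because
`‖β α‖ < ε` for `‖β‖ ≤ 1`, and it is a neighbourhood of `θ` since it contains `(ε / 2) • t`,
the preimage of `t` under the continuous map `x ↦ (ε / 2)⁻¹ • x`.
-/

namespace ExpVectorSpace

variable {K X : Type*} [RCLike K] [ExpVectorSpace K X]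

theorem smul_zero (α : K) : α • (0 : X) = 0 :=
  (smul_eq_zero_iff' α 0).2 (Or.inr rfl)

theorem zero_smul_s8 (x : X) : (0 : K) • x = 0 :=
  (smul_eq_zero_iff' 0 x).2 (Or.inl rfl)

theorem evsBalanced_ball_smul (ε : ℝ) (t : Set X) :
    EvsBalanced K (Metric.ball (0 : K) ε • t) := by
  rintro β hβ _ ⟨α, hα, w, hw, rfl⟩
  refine ⟨β * α, ?_, w, hw, (mul_smul' β α w).symm⟩
  rw [mem_ball_zero_iff] at hα ⊢
  calc ‖β * α‖ = ‖β‖ * ‖α‖ := norm_mul β α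
    _ ≤ 1 * ‖α‖ := by gcongr
    _ < ε := by rwa [one_mul]

end ExpVectorSpace

namespace TopExpVectorSpace

open ExpVectorSpace

variable {K X : Type*} [RCLike K] [TopologicalSpace X] [TopExpVectorSpace K X]

theorem continuous_const_smul (c : K) : Continuous fun x : X => c • x :=
  continuous_smul'.comp (continuous_const.prodMk continuous_id)

theorem smul_set_mem_nhds_zero {c : K} (hc : c ≠ 0) {t : Set X} (ht : t ∈ nhds (0 : X)) :
    c • t ∈ nhds (0 : X) := by
  have hpre : (fun x : X => c⁻¹ • x) ⁻¹' t ∈ nhds (0 : X) :=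
    (continuous_const_smul c⁻¹).continuousAt.preimage_mem_nhds (by rwa [ExpVectorSpace.smul_zero])
  refine Filter.mem_of_superset hpre fun x hx => ⟨c⁻¹ • x, hx, ?_⟩
  change c • c⁻¹ • x = x
  rw [mul_smul', mul_inv_cancel₀ hc, one_smul']

theorem ball_smul_mem_nhds_zero {ε : ℝ} (hε : 0 < ε) {t : Set X} (ht : t ∈ nhds (0 : X)) :
    Metric.ball (0 : K) ε • t ∈ nhds (0 : X) := by
  set c : K := ((ε / 2 : ℝ) : K)
  have hc : c ∈ Metric.ball (0 : K) ε := by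
    rw [mem_ball_zero_iff, RCLike.norm_ofReal, abs_of_pos (half_pos hε)]
    exact half_lt_self hε
  have hc₀ : c ≠ 0 := RCLike.ofReal_ne_zero.2 (half_pos hε).ne'
  exact Filter.mem_of_superset (smul_set_mem_nhds_zero hc₀ ht) (Set.smul_set_subset_smul hc)

theorem exists_ball_smul_subset {U : Set X} (hU : U ∈ nhds (0 : X)) :
    ∃ ε > 0, ∃ t ∈ nhds (0 : X), Metric.ball (0 : K) ε • t ⊆ U := by
  have hpre : (fun p : K × X => p.1 • p.2) ⁻¹' U ∈ nhds ((0 : K), (0 : X)) :=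
    continuous_smul'.continuousAt.preimage_mem_nhds (by rwa [← zero_smul_s8 (0 : X)] at hU)
  obtain ⟨s, hs, t, ht, hst⟩ := mem_nhds_prod_iff.1 hpre
  obtain ⟨ε, hε, hball⟩ := Metric.mem_nhds_iff.1 hs
  exact ⟨ε, hε, t, ht, Set.smul_subset_iff.2 fun α hα w hw => hst (Set.mk_mem_prod (hball hα) hw)⟩

end TopExpVectorSpace

open TopExpVectorSpace in
/-- every neighbourhood of θ contains a balanced neighbourhood of θ. -/
theorem stmt8 {K X : Type*} [RCLike K] [TopologicalSpace X] [TopExpVectorSpace K X]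
    {U : Set X} (hU : U ∈ nhds (0 : X)) :
    ∃ V ∈ nhds (0 : X), EvsBalanced K V ∧ V ⊆ U := by
  obtain ⟨ε, hε, t, ht, hsub⟩ := exists_ball_smul_subset (K := K) hU
  exact ⟨_, ball_smul_mem_nhds_zero hε ht, ExpVectorSpace.evsBalanced_ball_smul ε t, hsub⟩
end

section
/- In a topological exponential vector space X over K, if x ≰ y then there exist balanced neighbourhoods U, V of θ such that ↑(x + U) ∩ ↓(y + V) = ∅. -/
/-!
Since `≤` is closed and addition is continuous, `¬ x ≤ y` persists on a product neighbourhood: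
`¬ x + u ≤ y + v` for `u ∈ U₀`, `v ∈ V₀`. Continuity of `(α, u) ↦ α • u` at `(0, θ)` gives
`r > 0` and `W` with `α • W ⊆ U₀` for `‖α‖ < r`, so `⋃_{‖α‖ < r} α • W` is a balanced
neighbourhood inside `U₀` (it contains `c • W` for any small `c ≠ 0`); likewise inside `V₀`.
Transitivity of `≤` turns the separation into `↑(x + U) ∩ ↓(y + V) = ∅`.
-/

open Pointwise

open Filter Topology

section

variable {K X : Type*} [RCLike K]

-- Not a global instance: it would give `X` a second route to `AddMonoid X` and change how
-- `0` and `+` on `X` elaborate.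
abbrev ExpVectorSpace.distribMulAction [ExpVectorSpace K X] : DistribMulAction K X where
  one_smul := ExpVectorSpace.one_smul'
  mul_smul a b x := (ExpVectorSpace.mul_smul' a b x).symm
  smul_zero a := (ExpVectorSpace.smul_eq_zero_iff' a 0).2 (Or.inr rfl)
  smul_add := ExpVectorSpace.smul_add'

theorem evsBalanced_iff_balanced [ExpVectorSpace K X] {A : Set X} :
    EvsBalanced K A ↔ Balanced K A :=
  balanced_iff_smul_mem.symm

namespace TopExpVectorSpace

variable [TopologicalSpace X] [TopExpVectorSpace K X]

instance toContinuousSMul : ContinuousSMul K X :=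
  ⟨TopExpVectorSpace.continuous_smul'⟩

variable (K X)

theorem continuousAdd : ContinuousAdd X :=
  ⟨TopExpVectorSpace.continuous_add' (K := K)⟩

theorem orderClosedTopology : OrderClosedTopology X :=
  ⟨TopExpVectorSpace.isClosed_le' (K := K)⟩

end TopExpVectorSpace

end

theorem exists_mem_nhds_zero_balanced_subset (𝕜 : Type*) {E : Type*}
    [NontriviallyNormedField 𝕜] [AddMonoid E] [DistribMulAction 𝕜 E] [TopologicalSpace E]
    [ContinuousSMul 𝕜 E] {U : Set E} (hU : U ∈ 𝓝 (0 : E)) :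
    ∃ W ∈ 𝓝 (0 : E), Balanced 𝕜 W ∧ W ⊆ U := by
  have hsmul : (fun p : 𝕜 × E => p.1 • p.2) ⁻¹' U ∈ 𝓝 ((0 : 𝕜), (0 : E)) :=
    continuous_smul.continuousAt.preimage_mem_nhds (by rwa [smul_zero])
  obtain ⟨s, hs, V, hV, hsV⟩ := mem_nhds_prod_iff.1 hsmul
  obtain ⟨r, hr, hrs⟩ := Metric.mem_nhds_iff.1 hs
  obtain ⟨y, hy₀, hyr⟩ := NormedField.exists_norm_lt 𝕜 hr
  refine ⟨{w | ∃ c : 𝕜, ‖c‖ < r ∧ ∃ v ∈ V, w = c • v}, ?_, ?_, ?_⟩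
  · refine mem_of_superset ((set_smul_mem_nhds_zero_iff (norm_pos_iff.1 hy₀)).2 hV) ?_
    rintro _ ⟨v, hv, rfl⟩
    exact ⟨y, hyr, v, hv, rfl⟩
  · refine balanced_iff_smul_mem.2 fun a ha => ?_
    rintro _ ⟨c, hc, v, hv, rfl⟩
    refine ⟨a * c, ?_, v, hv, smul_smul a c v⟩
    calc ‖a * c‖ = ‖a‖ * ‖c‖ := norm_mul a c
      _ ≤ ‖c‖ := mul_le_of_le_one_left (norm_nonneg c) ha
      _ < r := hc
  · rintro _ ⟨c, hc, v, hv, rfl⟩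
    exact hsV (Set.mk_mem_prod (hrs (mem_ball_zero_iff.2 hc)) hv)

theorem exists_nhds_zero_forall_not_add_le {E : Type*} [AddZeroClass E] [Preorder E]
    [TopologicalSpace E] [ContinuousAdd E] [OrderClosedTopology E] {x y : E} (h : ¬ x ≤ y) :
    ∃ U ∈ 𝓝 (0 : E), ∃ V ∈ 𝓝 (0 : E), ∀ u ∈ U, ∀ v ∈ V, ¬ x + u ≤ y + v := by
  have hxy : {p : E × E | p.1 ≤ p.2}ᶜ ∈ 𝓝 (x + 0, y + 0) := by
    simpa only [add_zero] using isClosed_le_prod.isOpen_compl.mem_nhds h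
  have hcont : ContinuousAt (fun p : E × E => (x + p.1, y + p.2)) (0, 0) := by fun_prop
  obtain ⟨U, hU, V, hV, hUV⟩ := mem_nhds_prod_iff.1 (hcont.preimage_mem_nhds hxy)
  exact ⟨U, hU, V, hV, fun u hu v hv => hUV (Set.mk_mem_prod hu hv)⟩

theorem upSet_inter_downSet_eq_empty {E : Type*} [Preorder E] {A B : Set E}
    (h : ∀ a ∈ A, ∀ b ∈ B, ¬ a ≤ b) : upSet A ∩ downSet B = ∅ := by
  rw [Set.eq_empty_iff_forall_notMem]
  rintro z ⟨⟨a, ha, haz⟩, ⟨b, hb, hzb⟩⟩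
  exact h a ha b hb (haz.trans hzb)

/-- if x ≰ y then there exist balanced neighbourhoods U, V of θ with
↑(x + U) ∩ ↓(y + V) = ∅. -/
theorem stmt11 {K X : Type*} [RCLike K] [TopologicalSpace X] [TopExpVectorSpace K X]
    {x y : X} (h : ¬ x ≤ y) :
    ∃ U ∈ nhds (0 : X), ∃ V ∈ nhds (0 : X), EvsBalanced K U ∧ EvsBalanced K V ∧
      upSet ((fun u => x + u) '' U) ∩ downSet ((fun v => y + v) '' V) = ∅ := by
  let := ExpVectorSpace.distribMulAction (K := K) (X := X)
  have := TopExpVectorSpace.continuousAdd K X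
  have := TopExpVectorSpace.orderClosedTopology K X
  obtain ⟨U₀, hU₀, V₀, hV₀, hsep⟩ := exists_nhds_zero_forall_not_add_le h
  obtain ⟨U, hU, hUbal, hUU₀⟩ := exists_mem_nhds_zero_balanced_subset K hU₀
  obtain ⟨V, hV, hVbal, hVV₀⟩ := exists_mem_nhds_zero_balanced_subset K hV₀
  refine ⟨U, hU, V, hV, evsBalanced_iff_balanced.2 hUbal, evsBalanced_iff_balanced.2 hVbal,
    upSet_inter_downSet_eq_empty ?_⟩
  rintro _ ⟨u, hu, rfl⟩ _ ⟨v, hv, rfl⟩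
  exact hsep u (hUU₀ hu) v (hVV₀ hv)
end

section
/- A subset A of a topological exponential vector space X over K is bounded if and only if for every sequence (x_n) in A and every sequence (λ_n) in K with λ_n → 0, we have λ_n x_n → θ. (For the 'if' direction assume X is first countable, or use the sequential argument as in the paper.) -/
open Pointwise

/-! If `A` is not bounded, some neighbourhood `V` of `θ` witnesses this at every scale `1/(n+1)`:
there are scalars `‖μₙ‖ ≤ 1/(n+1)` and points `aₙ ∈ A` with `μₙ • aₙ ∉ V`, a null sequence of
scalars along which `μₙ • aₙ` stays away from `θ`. -/

open Filter Topology

section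

variable {K X : Type*} [RCLike K] [TopologicalSpace X] [TopExpVectorSpace K X] {A : Set X}

theorem EvsBounded.tendsto_smul {ι : Type*} {F : Filter ι} (hA : EvsBounded K A) {x : ι → X}
    (hx : ∀ i, x i ∈ A) {l : ι → K} (hl : Tendsto l F (𝓝 0)) :
    Tendsto (fun i => l i • x i) F (𝓝 0) := by
  rw [tendsto_def]
  intro V hV
  obtain ⟨α, hα, hsub⟩ := hA V hV
  have hsmall : ∀ᶠ i in F, ‖l i‖ < α := by
    simpa using hl.norm.eventually_lt_const (by simpa using hα)
  filter_upwards [hsmall] with i hi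
  exact hsub (l i) hi.le (Set.smul_mem_smul_set (hx i))

theorem exists_seq_smul_notMem_of_not_evsBounded (hA : ¬EvsBounded K A) :
    ∃ V ∈ 𝓝 (0 : X), ∃ μ : ℕ → K, (∀ n, ‖μ n‖ ≤ 1 / (n + 1)) ∧
      ∃ a : ℕ → X, (∀ n, a n ∈ A) ∧ ∀ n, μ n • a n ∉ V := by
  simp only [EvsBounded, not_forall, not_exists, not_and, exists_prop] at hA
  obtain ⟨V, hV, hbad⟩ := hA
  have hscale (n : ℕ) : ∃ μ : K, ‖μ‖ ≤ 1 / (n + 1) ∧ ∃ a ∈ A, μ • a ∉ V := by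
    obtain ⟨μ, hμ, hns⟩ := hbad (1 / (n + 1)) (by positivity)
    obtain ⟨_, ⟨a, ha, rfl⟩, haV⟩ := Set.not_subset.mp hns
    exact ⟨μ, hμ, a, ha, haV⟩
  choose μ hμ a ha haV using hscale
  exact ⟨V, hV, μ, hμ, a, ha, haV⟩

theorem evsBounded_of_tendsto_smul
    (h : ∀ x : ℕ → X, (∀ n, x n ∈ A) → ∀ l : ℕ → K,
      Tendsto l atTop (𝓝 0) → Tendsto (fun n => l n • x n) atTop (𝓝 0)) :
    EvsBounded K A := by
  by_contra hA
  obtain ⟨V, hV, μ, hμ, a, ha, haV⟩ := exists_seq_smul_notMem_of_not_evsBounded hA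
  have hμ0 : Tendsto μ atTop (𝓝 0) :=
    tendsto_zero_iff_norm_tendsto_zero.mpr <|
      squeeze_zero (fun _ => norm_nonneg _) hμ tendsto_one_div_add_atTop_nhds_zero_nat
  obtain ⟨n, hn⟩ := ((h a ha μ hμ0).eventually_mem hV).exists
  exact haV n hn

end

theorem stmt13_general {K X : Type*} [RCLike K] [TopologicalSpace X] [TopExpVectorSpace K X]
    (A : Set X) :
    EvsBounded K A ↔
      ∀ x : ℕ → X, (∀ n, x n ∈ A) → ∀ l : ℕ → K,
        Filter.Tendsto l Filter.atTop (nhds (0 : K)) →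
        Filter.Tendsto (fun n => l n • x n) Filter.atTop (nhds (0 : X)) :=
  ⟨fun hA _ hx _ hl => hA.tendsto_smul hx hl, evsBounded_of_tendsto_smul⟩

/-- (X first countable) A is bounded iff for every sequence (xₙ) in A and
every null sequence (λₙ) of scalars, λₙ • xₙ → θ. -/
theorem stmt13 {K X : Type*} [RCLike K] [TopologicalSpace X] [TopExpVectorSpace K X]
    [FirstCountableTopology X] (A : Set X) :
    EvsBounded K A ↔
      ∀ x : ℕ → X, (∀ n, x n ∈ A) → ∀ l : ℕ → K,
        Filter.Tendsto l Filter.atTop (nhds (0 : K)) →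
        Filter.Tendsto (fun n => l n • x n) Filter.atTop (nhds (0 : X)) :=
  stmt13_general A
end

section
/- The property of being a radial evs is productive: if {X_i : i ∈ Λ} is a family of radial exponential vector spaces over K, then the product evs ∏_i X_i (with coordinatewise operations and order) is radial. -/
open Pointwise

/-- An evs is radial if any two distinct points can be separated by an absorbing set
(containing exactly one of them). -/
def EvsRadial (K : Type*) (X : Type*) [RCLike K] [ExpVectorSpace K X] : Prop :=
  ∀ x y : X, x ≠ y → ∃ A : Set X,
    EvsAbsorbing K A ∧ ((x ∈ A ∧ y ∉ A) ∨ (y ∈ A ∧ x ∉ A))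

/-- In a product of partial orders, an element is minimal iff it is coordinatewise minimal. -/
lemma pi_isMin_iff {ι : Type*} {X : ι → Type*} [∀ i, PartialOrder (X i)]
    (x : ∀ i, X i) : IsMin x ↔ ∀ i, IsMin (x i) := by
  classical
  constructor
  · intro hx i y hy
    have h1 : Function.update x i y ≤ x := by
      intro j
      by_cases hj : j = i
      · subst hj; simpa using hy
      · simp [Function.update_of_ne hj]
    have h2 := hx h1
    simpa using h2 i
  · intro h y hy
    intro i
    exact h i (hy i)

/-- The product of a family of exponential vector spaces is an exponential vector space
with coordinatewise operations and order. -/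
instance Pi.instExpVectorSpace {K ι : Type*} [RCLike K] {X : ι → Type*}
    [∀ i, ExpVectorSpace K (X i)] : ExpVectorSpace K (∀ i, X i) where
  toAddCommMonoid := Pi.addCommMonoid
  toPartialOrder := Pi.partialOrder
  toSMul := Pi.instSMul
  add_le_add_right' h z i := ExpVectorSpace.add_le_add_right' (h i) (z i)
  smul_le_smul' h α i := ExpVectorSpace.smul_le_smul' (h i) α
  smul_add' α x y := funext fun i => ExpVectorSpace.smul_add' α (x i) (y i)
  mul_smul' α β x := funext fun i => ExpVectorSpace.mul_smul' α β (x i)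
  add_smul_le' α β x i := ExpVectorSpace.add_smul_le' α β (x i)
  one_smul' x := funext fun i => ExpVectorSpace.one_smul' (x i)
  smul_eq_zero_iff' α x := by
    constructor
    · intro h
      by_cases hα : α = 0
      · exact Or.inl hα
      · refine Or.inr (funext fun i => ?_)
        have hi : α • x i = 0 := congrFun h i
        rcases (ExpVectorSpace.smul_eq_zero_iff' α (x i)).mp hi with h' | h'
        · exact absurd h' hα
        · exact h'
    · rintro (h | h)
      · exact funext fun i => (ExpVectorSpace.smul_eq_zero_iff' α (x i)).mpr (Or.inl h)
      · exact funext fun i =>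
          (ExpVectorSpace.smul_eq_zero_iff' α (x i)).mpr (Or.inr (congrFun h i))
  add_neg_one_smul_eq_zero_iff' x := by
    rw [pi_isMin_iff]
    constructor
    · intro h i
      exact (ExpVectorSpace.add_neg_one_smul_eq_zero_iff' (x i)).mp (congrFun h i)
    · intro h
      exact funext fun i =>
        (ExpVectorSpace.add_neg_one_smul_eq_zero_iff' (x i)).mpr (h i)
  exists_isMin_le' x := by
    choose p hp hle using fun i => ExpVectorSpace.exists_isMin_le' (K := K) (x i)
    exact ⟨p, (pi_isMin_iff p).mpr hp, hle⟩

theorem EvsAbsorbing.preimage {K X Y : Type*} [RCLike K] [ExpVectorSpace K X]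
    [ExpVectorSpace K Y] {f : X → Y} (hf : ∀ (μ : K) (x : X), f (μ • x) = μ • f x)
    {A : Set Y} (hA : EvsAbsorbing K A) : EvsAbsorbing K (f ⁻¹' A) := by
  intro x
  obtain ⟨α, hα, hmem⟩ := hA (f x)
  exact ⟨α, hα, fun μ hμ => by simpa only [Set.mem_preimage, hf] using hmem μ hμ⟩

theorem EvsRadial.of_separating_maps {K X ι : Type*} [RCLike K] [ExpVectorSpace K X]
    {Y : ι → Type*} [∀ i, ExpVectorSpace K (Y i)] (f : ∀ i, X → Y i)
    (hf : ∀ i (μ : K) (x : X), f i (μ • x) = μ • f i x) (hY : ∀ i, EvsRadial K (Y i))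
    (hsep : ∀ x y : X, x ≠ y → ∃ i, f i x ≠ f i y) : EvsRadial K X := by
  intro x y hxy
  obtain ⟨i, hi⟩ := hsep x y hxy
  obtain ⟨A, hA, hxyA⟩ := hY i (f i x) (f i y) hi
  exact ⟨f i ⁻¹' A, hA.preimage (hf i), hxyA⟩

/-- the property of being radial is productive: a product of radial evs
is radial. -/
theorem stmt19 {K ι : Type*} [RCLike K] {X : ι → Type*} [∀ i, ExpVectorSpace K (X i)]
    (h : ∀ i, EvsRadial K (X i)) : EvsRadial K (∀ i, X i) :=
  EvsRadial.of_separating_maps (fun i x => x i) (fun _ _ _ => rfl) h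
    fun _ _ hxy => Function.ne_iff.mp hxy
end
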